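/- arXiv:math/0608358 — 3 statements merged into one kernel-verified Lean document; each statement's English description precedes it below -/
import Mathlib

section
/- If 2a² ≥ (4π − m)m and 2b² ≥ (4π − n)n with a, b ≥ 0 and m, n > 0, then 2(a + b)² ≥ (4π − (m + n))(m + n). -/
open Real

theorem isoperimetric_addition (a b m n : ℝ) (ha : 0 ≤ a) (hb : 0 ≤ b)
    (hm : 0 < m) (hn : 0 < n)
    (h1 : (4 * π - m) * m ≤ 2 * a ^ 2) (h2 : (4 * π - n) * n ≤ 2 * b ^ 2) :
    (4 * π - (m + n)) * (m + n) ≤ 2 * (a + b) ^ 2 := by nlinarith [mul_nonneg ha hb, mul_pos hm hn]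
end

section
/- Let f : (0,∞) → ℝ satisfy the functional equation f(1/(4b)) = −2b − 4b² f(b) for all b > 0. Then f(1/2) = −1/2; moreover, if f is strictly decreasing on [1/2, ∞), then f is strictly decreasing on (0, 1/2] as well. -/
theorem functional_equation_decreasing (f : ℝ → ℝ)
    (hf : ∀ b : ℝ, 0 < b → f (1 / (4 * b)) = -2 * b - 4 * b ^ 2 * f b) :
    f (1 / 2) = -1 / 2 ∧
      (StrictAntiOn f (Set.Ici (1 / 2)) → StrictAntiOn f (Set.Ioc 0 (1 / 2))) := by
  have h12 : f (1 / 2) = -1 / 2 := by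
    have h := hf (1 / 2) (by norm_num)
    norm_num at h
    linarith
  refine ⟨h12, fun hanti x hx y hy hxy => ?_⟩
  obtain ⟨hx0, hx2⟩ := hx
  obtain ⟨hy0, hy2⟩ := hy
  set a := 1 / (4 * x) with ha_def
  set b := 1 / (4 * y) with hb_def
  have ha0 : 0 < a := by positivity
  have hb0 : 0 < b := by positivity
  have hab : b < a := by
    apply one_div_lt_one_div_of_lt <;> linarith
  have hbge : (1 : ℝ) / 2 ≤ b := by
    rw [hb_def, div_le_div_iff₀ (by norm_num) (by linarith)]
    linarith
  have hagt : (1 : ℝ) / 2 < a := lt_of_le_of_lt hbge hab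
  have hfx : f x = -2 * a - 4 * a ^ 2 * f a := by
    have h := hf a ha0
    have : 1 / (4 * a) = x := by
      rw [ha_def]; field_simp
    rwa [this] at h
  have hfy : f y = -2 * b - 4 * b ^ 2 * f b := by
    have h := hf b hb0
    have : 1 / (4 * b) = y := by
      rw [hb_def]; field_simp
    rwa [this] at h
  have hfa : f a < -1 / 2 := by
    have := hanti (by simp : (1:ℝ)/2 ∈ Set.Ici (1/2)) (le_of_lt hagt) hagt
    linarith [this]
  have hfb : f b ≤ -1 / 2 := by
    rcases eq_or_lt_of_le hbge with h | h
    · rw [← h]; linarith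
    · have := hanti (by simp : (1:ℝ)/2 ∈ Set.Ici (1/2)) (le_of_lt h) h
      linarith [this]
  have hfab : f a < f b := hanti (Set.mem_Ici.mpr hbge) (le_of_lt hagt) hab
  rw [hfx, hfy]
  have key1 : 4 * b ^ 2 * (f b - f a) > 0 := by
    have : 0 < f b - f a := by linarith
    positivity
  have key2 : 4 * (b ^ 2 - a ^ 2) * f a > 4 * (b ^ 2 - a ^ 2) * (-1 / 2) := by
    have hneg : b ^ 2 - a ^ 2 < 0 := by nlinarith
    nlinarith
  nlinarith [sq_nonneg (a - b), sq_nonneg (a + b)]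
end

section
/- For each real t with 0 < t < 1, the series ∑_{n=0}^∞ (−1)^{n(n+1)/2} t^{(2n+1)²} is positive. -/
/-!
Write `Φ(x) = ∑_{n ∈ ℤ} x^{n²}`, `G(x) = ∑_{n ∈ ℤ} x^{(2n+1)²}` and
`F(x) = ∑_{n ∈ ℤ} χ(n) x^{(2n+1)²}` with `χ(n) = (-1)^{n(n+1)/2}`. As `χ(-1-n) = χ(n)`, the series
of the theorem is `F(t)/2`. Expanding a product of two such series over `ℤ × ℤ` and substituting
`(m, n) = (a + b, a - b)` or `(a + b, a - b - 1)` according to the parity of `m + n` gives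
`Φ(x) Φ(-x) = Φ(-x²)²` and `F(t)² = 2 Φ(-t⁸) G(t²)`. Since `Φ(q) > 0`, the first identity passes
positivity of `Φ(-q²)` on to `Φ(-q)`, and `Φ(-q) > 0` is clear for `q < 1/3`; so `Φ(-q) > 0` for
all `q ∈ [0, 1)`. Hence `F` does not vanish on `(0, 1)`, and being continuous and positive at
`1/2`, it is positive on all of `(0, 1)`.
-/

open Set

noncomputable section

def triSign (n : ℤ) : ℝ := ((n * (n + 1) / 2).negOnePow : ℝ)

def thetaSq (x : ℝ) : ℝ := ∑' n : ℤ, x ^ (n.natAbs ^ 2)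

def thetaOddSq (x : ℝ) : ℝ := ∑' n : ℤ, x ^ ((2 * n + 1).natAbs ^ 2)

def thetaOddSqSigned (x : ℝ) : ℝ := ∑' n : ℤ, triSign n * x ^ ((2 * n + 1).natAbs ^ 2)

def thetaOddSqSignedNat (x : ℝ) : ℝ :=
  ∑' n : ℕ, (-1 : ℝ) ^ (n * (n + 1) / 2) * x ^ ((2 * n + 1) ^ 2)

end

lemma summable_pow_natAbs {r : ℝ} (h0 : 0 ≤ r) (h1 : r < 1) :
    Summable fun n : ℤ => r ^ n.natAbs := by
  have hg := summable_geometric_of_lt_one h0 h1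
  have hneg : ∀ n : ℕ, (-(n + 1 : ℤ)).natAbs = n + 1 := by omega
  refine .of_nat_of_neg_add_one (by simpa using hg) ?_
  simpa only [hneg, pow_succ] using hg.mul_right r

lemma summable_norm_mul_pow {c : ℤ → ℝ} {e : ℤ → ℕ} {x : ℝ} (hx : |x| < 1)
    (hc : ∀ n, |c n| ≤ 1) (he : ∀ n, n.natAbs ≤ e n) :
    Summable fun n => ‖c n * x ^ e n‖ := by
  refine .of_nonneg_of_le (fun _ => norm_nonneg _) (fun n => ?_)
    (summable_pow_natAbs (abs_nonneg x) hx)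
  rw [Real.norm_eq_abs, abs_mul, abs_pow]
  exact (mul_le_of_le_one_left (by positivity) (hc n)).trans
    (pow_le_pow_of_le_one (abs_nonneg x) hx.le (he n))

lemma abs_triSign (n : ℤ) : |triSign n| = 1 := by
  rw [triSign, Int.coe_negOnePow, abs_pow, abs_neg, abs_one, one_pow]

lemma natAbs_le_natAbs_sq (n : ℤ) : n.natAbs ≤ n.natAbs ^ 2 := Nat.le_self_pow two_ne_zero _

lemma natAbs_le_natAbs_two_mul_add_one_sq (n : ℤ) : n.natAbs ≤ (2 * n + 1).natAbs ^ 2 :=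
  (show n.natAbs ≤ (2 * n + 1).natAbs by omega).trans (natAbs_le_natAbs_sq _)

lemma summable_norm_pow_natAbs_sq {x : ℝ} (hx : |x| < 1) :
    Summable fun n : ℤ => ‖x ^ (n.natAbs ^ 2)‖ := by
  simpa using summable_norm_mul_pow hx (c := 1) (by simp) natAbs_le_natAbs_sq

lemma summable_norm_pow_oddSq {x : ℝ} (hx : |x| < 1) :
    Summable fun n : ℤ => ‖x ^ ((2 * n + 1).natAbs ^ 2)‖ := by
  simpa using summable_norm_mul_pow hx (c := 1) (by simp) natAbs_le_natAbs_two_mul_add_one_sq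

lemma summable_norm_triSign_mul_pow_oddSq {x : ℝ} (hx : |x| < 1) :
    Summable fun n : ℤ => ‖triSign n * x ^ ((2 * n + 1).natAbs ^ 2)‖ :=
  summable_norm_mul_pow hx (abs_triSign · |>.le) natAbs_le_natAbs_two_mul_add_one_sq

section Products

variable {R : Type*} [NormedRing R] [CompleteSpace R] {ι κ : Type*}

lemma tsum_mul_tsum_eq_tsum_add_tsum_compl {f : ι → R} {g : κ → R}
    (hf : Summable fun n => ‖f n‖) (hg : Summable fun n => ‖g n‖) (s : Set (ι × κ)) :
    (∑' i, f i) * (∑' j, g j) =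
      (∑' p : s, f p.1.1 * g p.1.2) + ∑' p : ↥sᶜ, f p.1.1 * g p.1.2 := by
  have hfg := summable_mul_of_summable_norm hf hg
  rw [tsum_mul_tsum_of_summable_norm hf hg,
    (hfg.subtype s).tsum_add_tsum_compl (hfg.subtype sᶜ)]

lemma tsum_subtype_mul_eq_of_equiv {ι' κ' : Type*} {f : ι → R} {g : κ → R} {u : ι' → R}
    {v : κ' → R} (hu : Summable fun n => ‖u n‖) (hv : Summable fun n => ‖v n‖)
    {s : Set (ι × κ)} (e : ι' × κ' ≃ s)
    (h : ∀ a b, f (e (a, b)).1.1 * g (e (a, b)).1.2 = u a * v b) :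
    ∑' p : s, f p.1.1 * g p.1.2 = (∑' a, u a) * ∑' b, v b := by
  rw [← e.tsum_eq, tsum_mul_tsum_of_summable_norm hu hv]
  exact tsum_congr fun q => h q.1 q.2

end Products

def evenSumSet : Set (ℤ × ℤ) := {p | Even (p.1 + p.2)}

def addSubEquiv : ℤ × ℤ ≃ evenSumSet where
  toFun q := ⟨(q.1 + q.2, q.1 - q.2), q.1, by ring⟩
  invFun p := ((p.1.1 + p.1.2) / 2, (p.1.1 - p.1.2) / 2)
  left_inv q := by ext <;> simp <;> omega
  right_inv := by
    rintro ⟨⟨m, n⟩, k, hk⟩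
    ext <;> simp <;> omega

def addSubPredEquiv : ℤ × ℤ ≃ ↥evenSumSetᶜ where
  toFun q := ⟨(q.1 + q.2, q.1 - q.2 - 1), by
    rintro ⟨k, hk⟩
    omega⟩
  invFun p := ((p.1.1 + p.1.2 + 1) / 2, (p.1.1 - p.1.2 - 1) / 2)
  left_inv q := by ext <;> simp <;> omega
  right_inv := by
    rintro ⟨⟨m, n⟩, h⟩
    obtain ⟨k, hk⟩ := Int.not_even_iff_odd.mp h
    ext <;> simp <;> omega

def swapOddSumEquiv : ↥evenSumSetᶜ ≃ ↥evenSumSetᶜ :=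
  (Equiv.prodComm ℤ ℤ).subtypeEquiv fun p => by simp [evenSumSet, add_comm]

lemma neg_pow_natAbs_sq {R : Type*} [Ring R] (x : R) (k : ℤ) :
    (-x) ^ (k.natAbs ^ 2) = (k.negOnePow : R) * x ^ (k.natAbs ^ 2) := by
  rw [neg_pow, Int.coe_negOnePow,
    neg_one_pow_congr (m := k.natAbs ^ 2) (n := k.natAbs) (by simp [Nat.even_pow])]

lemma pow_mul_pow_eq_of_add_eq {M : Type*} [Monoid M] (x : M) {i j k l : ℕ} (a b : ℕ)
    (h : i + j = a * k + b * l) : x ^ i * x ^ j = (x ^ a) ^ k * (x ^ b) ^ l := by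
  rw [← pow_add, h, pow_add, pow_mul, pow_mul]

lemma triSign_mul_triSign_of_eq {a b s : ℤ} (h : a * (a + 1) + b * (b + 1) = 2 * s) :
    triSign a * triSign b = (s.negOnePow : ℝ) := by
  obtain ⟨u, hu⟩ := Int.even_mul_succ_self a
  obtain ⟨v, hv⟩ := Int.even_mul_succ_self b
  have hs : a * (a + 1) / 2 + b * (b + 1) / 2 = s := by omega
  rw [triSign, triSign, ← Int.cast_mul, ← Units.val_mul, ← Int.negOnePow_add, hs]

lemma triSign_add_mul_triSign_sub (c k : ℤ) :
    triSign (c + k) * triSign (c - k) = (k.negOnePow : ℝ) := by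
  rw [triSign_mul_triSign_of_eq (s := c * (c + 1) + k * k) (by ring), Int.negOnePow_add,
    Int.negOnePow_even _ (Int.even_mul_succ_self c), Int.negOnePow_mul_self, one_mul]

lemma triSign_add_mul_triSign_sub_sub_one (k d : ℤ) :
    triSign (k + d) * triSign (k - d - 1) = (k.negOnePow : ℝ) := by
  rw [triSign_mul_triSign_of_eq (s := k * k + d * (d + 1)) (by ring), Int.negOnePow_add,
    Int.negOnePow_even _ (Int.even_mul_succ_self d), Int.negOnePow_mul_self, mul_one]

lemma pow_mul_neg_pow_addSub (x : ℝ) (a b : ℤ) :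
    x ^ ((a + b).natAbs ^ 2) * (-x) ^ ((a - b).natAbs ^ 2) =
      (-x ^ 2) ^ (a.natAbs ^ 2) * (-x ^ 2) ^ (b.natAbs ^ 2) := by
  have hexp : (a + b).natAbs ^ 2 + (a - b).natAbs ^ 2 = 2 * a.natAbs ^ 2 + 2 * b.natAbs ^ 2 := by
    zify; simp only [sq_abs]; ring
  rw [neg_pow_natAbs_sq, neg_pow_natAbs_sq, neg_pow_natAbs_sq, Int.negOnePow_sub,
    mul_left_comm, pow_mul_pow_eq_of_add_eq x 2 2 hexp]
  push_cast
  ring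

lemma pow_mul_neg_pow_swap (x : ℝ) {m n : ℤ} (h : ¬Even (m + n)) :
    x ^ (n.natAbs ^ 2) * (-x) ^ (m.natAbs ^ 2) = -(x ^ (m.natAbs ^ 2) * (-x) ^ (n.natAbs ^ 2)) := by
  have hmn : m.negOnePow = -n.negOnePow := by
    obtain ⟨k, hk⟩ := Int.not_even_iff_odd.mp h
    rw [← Int.negOnePow_succ, Int.negOnePow_eq_iff]
    exact ⟨k - n, by omega⟩
  rw [neg_pow_natAbs_sq, neg_pow_natAbs_sq, hmn]
  push_cast
  ring

lemma triSign_mul_pow_addSub (t : ℝ) (c k : ℤ) :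
    triSign (c + k) * t ^ ((2 * (c + k) + 1).natAbs ^ 2) *
        (triSign (c - k) * t ^ ((2 * (c - k) + 1).natAbs ^ 2)) =
      (t ^ 2) ^ ((2 * c + 1).natAbs ^ 2) * (-t ^ 8) ^ (k.natAbs ^ 2) := by
  have hexp : (2 * (c + k) + 1).natAbs ^ 2 + (2 * (c - k) + 1).natAbs ^ 2 =
      2 * (2 * c + 1).natAbs ^ 2 + 8 * k.natAbs ^ 2 := by
    zify; simp only [sq_abs]; ring
  rw [neg_pow_natAbs_sq, mul_mul_mul_comm, triSign_add_mul_triSign_sub,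
    pow_mul_pow_eq_of_add_eq t 2 8 hexp]
  ring

lemma triSign_mul_pow_addSubPred (t : ℝ) (k d : ℤ) :
    triSign (k + d) * t ^ ((2 * (k + d) + 1).natAbs ^ 2) *
        (triSign (k - d - 1) * t ^ ((2 * (k - d - 1) + 1).natAbs ^ 2)) =
      (-t ^ 8) ^ (k.natAbs ^ 2) * (t ^ 2) ^ ((2 * d + 1).natAbs ^ 2) := by
  have hexp : (2 * (k + d) + 1).natAbs ^ 2 + (2 * (k - d - 1) + 1).natAbs ^ 2 =
      8 * k.natAbs ^ 2 + 2 * (2 * d + 1).natAbs ^ 2 := by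
    zify; simp only [sq_abs]; ring
  rw [neg_pow_natAbs_sq, mul_mul_mul_comm, triSign_add_mul_triSign_sub_sub_one,
    pow_mul_pow_eq_of_add_eq t 8 2 hexp]
  ring

lemma tsum_eq_zero_of_equiv_of_neg {α : Type*} {f : α → ℝ} (e : α ≃ α) (h : ∀ a, f (e a) = -f a) :
    ∑' a, f a = 0 := by
  have := e.tsum_eq f
  rw [tsum_congr h, tsum_neg] at this
  linarith

lemma abs_neg_pow_lt_one {x : ℝ} (hx : |x| < 1) {n : ℕ} (hn : n ≠ 0) : |-x ^ n| < 1 := by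
  rw [abs_neg, abs_pow]
  exact pow_lt_one₀ (abs_nonneg x) hx hn

lemma thetaSq_mul_thetaSq_neg {x : ℝ} (hx : |x| < 1) :
    thetaSq x * thetaSq (-x) = thetaSq (-x ^ 2) ^ 2 := by
  have hx2 := summable_norm_pow_natAbs_sq (abs_neg_pow_lt_one hx two_ne_zero)
  have hodd : ∑' p : ↥evenSumSetᶜ, x ^ (p.1.1.natAbs ^ 2) * (-x) ^ (p.1.2.natAbs ^ 2) = 0 :=
    tsum_eq_zero_of_equiv_of_neg swapOddSumEquiv fun p => pow_mul_neg_pow_swap x p.2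
  rw [thetaSq, thetaSq, tsum_mul_tsum_eq_tsum_add_tsum_compl (summable_norm_pow_natAbs_sq hx)
      (summable_norm_pow_natAbs_sq (by rwa [abs_neg])) evenSumSet,
    tsum_subtype_mul_eq_of_equiv (f := fun n : ℤ => x ^ (n.natAbs ^ 2))
      (g := fun n : ℤ => (-x) ^ (n.natAbs ^ 2)) hx2 hx2 addSubEquiv (pow_mul_neg_pow_addSub x),
    hodd, add_zero, thetaSq, ← sq]

lemma thetaOddSqSigned_sq {t : ℝ} (ht : |t| < 1) :
    thetaOddSqSigned t ^ 2 = 2 * thetaSq (-t ^ 8) * thetaOddSq (t ^ 2) := by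
  have hF := summable_norm_triSign_mul_pow_oddSq ht
  have hG := summable_norm_pow_oddSq (x := t ^ 2) (by simpa using abs_neg_pow_lt_one ht two_ne_zero)
  have hΦ := summable_norm_pow_natAbs_sq (abs_neg_pow_lt_one ht (n := 8) (by norm_num))
  set f := fun n : ℤ => triSign n * t ^ ((2 * n + 1).natAbs ^ 2)
  rw [sq, thetaOddSqSigned, tsum_mul_tsum_eq_tsum_add_tsum_compl hF hF evenSumSet,
    tsum_subtype_mul_eq_of_equiv (f := f) (g := f) hG hΦ addSubEquiv (triSign_mul_pow_addSub t),
    tsum_subtype_mul_eq_of_equiv (f := f) (g := f) hΦ hG addSubPredEquiv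
      (triSign_mul_pow_addSubPred t),
    thetaSq, thetaOddSq]
  ring

lemma tsum_int_eq_two_mul_tsum_nat {f : ℤ → ℝ} (hf : Summable f)
    (h : ∀ n : ℕ, f (-(n + 1)) = f n) : ∑' n, f n = 2 * ∑' n : ℕ, f n := by
  have hneg : Summable fun n : ℕ => f (-(n + 1)) :=
    hf.comp_injective fun m n hmn => by simpa using hmn
  rw [tsum_of_nat_of_neg_add_one (hf.comp_injective Nat.cast_injective) hneg, tsum_congr h,
    two_mul]

lemma triSign_natCast (n : ℕ) : triSign n = (-1 : ℝ) ^ (n * (n + 1) / 2) := by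
  rw [triSign, ← Int.cast_negOnePow_natCast]
  push_cast
  rfl

lemma triSign_neg_add_one (n : ℤ) : triSign (-(n + 1)) = triSign n := by
  rw [triSign, triSign, show -(n + 1) * (-(n + 1) + 1) = n * (n + 1) by ring]

lemma thetaOddSqSigned_eq_two_mul {x : ℝ} (hx : |x| < 1) :
    thetaOddSqSigned x = 2 * thetaOddSqSignedNat x := by
  have hterm (n : ℕ) : triSign n * x ^ ((2 * (n : ℤ) + 1).natAbs ^ 2) =
      (-1 : ℝ) ^ (n * (n + 1) / 2) * x ^ ((2 * n + 1) ^ 2) := by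
    rw [triSign_natCast, show (2 * (n : ℤ) + 1).natAbs = 2 * n + 1 by omega]
  have hsymm (n : ℕ) : triSign (-(n + 1 : ℤ)) * x ^ ((2 * -(n + 1 : ℤ) + 1).natAbs ^ 2) =
      triSign n * x ^ ((2 * (n : ℤ) + 1).natAbs ^ 2) := by
    rw [triSign_neg_add_one, show (2 * -(n + 1 : ℤ) + 1).natAbs = (2 * (n : ℤ) + 1).natAbs by omega]
  rw [thetaOddSqSigned,
    tsum_int_eq_two_mul_tsum_nat (summable_norm_triSign_mul_pow_oddSq hx).of_norm hsymm,
    tsum_congr hterm, thetaOddSqSignedNat]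

lemma norm_tsum_le_of_norm_le_geometric {E : Type*} [SeminormedAddCommGroup E] {a : ℕ → E}
    {r : ℝ} (h0 : 0 ≤ r) (h1 : r < 1) (ha : ∀ n, ‖a n‖ ≤ r ^ (n + 1)) :
    ‖∑' n, a n‖ ≤ r / (1 - r) := by
  have hg : Summable fun n : ℕ => r ^ (n + 1) := by
    simpa only [pow_succ] using (summable_geometric_of_lt_one h0 h1).mul_right r
  have ha' : Summable fun n => ‖a n‖ := .of_nonneg_of_le (fun _ => norm_nonneg _) ha hg
  calc ‖∑' n, a n‖ ≤ ∑' n, ‖a n‖ := norm_tsum_le_tsum_norm ha'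
    _ ≤ ∑' n : ℕ, r ^ (n + 1) := Summable.tsum_le_tsum ha ha' hg
    _ = r / (1 - r) := by
        rw [tsum_congr fun n => pow_succ' r n, tsum_mul_left, tsum_geometric_of_lt_one h0 h1,
          div_eq_mul_inv]

lemma thetaSq_pos {x : ℝ} (h0 : 0 ≤ x) (h1 : x < 1) : 0 < thetaSq x :=
  (summable_norm_pow_natAbs_sq (by rwa [abs_of_nonneg h0])).of_norm.tsum_pos
    (fun _ => pow_nonneg h0 _) 0 (by simp)

lemma thetaOddSq_pos {x : ℝ} (h0 : 0 < x) (h1 : x < 1) : 0 < thetaOddSq x :=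
  (summable_norm_pow_oddSq (by rwa [abs_of_pos h0])).of_norm.tsum_pos
    (fun _ => pow_nonneg h0.le _) 0 (pow_pos h0 _)

lemma thetaSq_eq_one_add_two_mul {x : ℝ} (hx : |x| < 1) :
    thetaSq x = 1 + 2 * ∑' n : ℕ, x ^ ((n + 1) ^ 2) := by
  have hf := (summable_norm_pow_natAbs_sq hx).of_norm
  have hnat : Summable fun n : ℕ => x ^ ((n : ℤ).natAbs ^ 2) := hf.comp_injective Nat.cast_injective
  have hneg : Summable fun n : ℕ => x ^ ((-(n + 1 : ℤ)).natAbs ^ 2) :=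
    hf.comp_injective (i := fun n : ℕ => -(n + 1 : ℤ)) fun m n hmn => by simp at hmn; exact hmn
  have hneg' (n : ℕ) : x ^ ((-(n + 1 : ℤ)).natAbs ^ 2) = x ^ ((n + 1) ^ 2) := by
    rw [show (-(n + 1 : ℤ)).natAbs = n + 1 by omega]
  rw [thetaSq, tsum_of_nat_of_neg_add_one (f := fun n : ℤ => x ^ (n.natAbs ^ 2)) hnat hneg,
    tsum_congr hneg', hnat.tsum_eq_zero_add]
  simp only [Int.natAbs_natCast]
  ring

lemma thetaSq_neg_pos_of_lt_third {q : ℝ} (h0 : 0 ≤ q) (h1 : q < 1 / 3) : 0 < thetaSq (-q) := by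
  have hq : |-q| < 1 := by rw [abs_neg, abs_of_nonneg h0]; linarith
  have htail : |∑' n : ℕ, (-q) ^ ((n + 1) ^ 2)| < 1 / 2 := by
    rw [← Real.norm_eq_abs]
    refine (norm_tsum_le_of_norm_le_geometric h0 (by linarith) fun n => ?_).trans_lt ?_
    · rw [Real.norm_eq_abs, abs_pow, abs_neg, abs_of_nonneg h0]
      exact pow_le_pow_of_le_one h0 (by linarith) (Nat.le_self_pow two_ne_zero _)
    · rw [div_lt_iff₀ (by linarith)]
      linarith
  rw [thetaSq_eq_one_add_two_mul hq]
  linarith [(abs_lt.mp htail).1]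

lemma thetaSq_neg_pos {q : ℝ} (h0 : 0 ≤ q) (h1 : q < 1) : 0 < thetaSq (-q) := by
  obtain ⟨k, hk⟩ := exists_pow_lt_of_lt_one (show (0 : ℝ) < 1 / 3 by norm_num) h1
  replace hk : q ^ 2 ^ k < 1 / 3 :=
    (pow_le_pow_of_le_one h0 h1.le (Nat.lt_two_pow_self).le).trans_lt hk
  induction k generalizing q with
  | zero => exact thetaSq_neg_pos_of_lt_third h0 (by simpa using hk)
  | succ k ih =>
    have hsq : 0 < thetaSq (-q ^ 2) ^ 2 :=
      pow_pos (ih (sq_nonneg q) (pow_lt_one₀ h0 h1 two_ne_zero) (by rwa [← pow_mul, ← pow_succ'])) 2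
    rw [← thetaSq_mul_thetaSq_neg (by rwa [abs_of_nonneg h0])] at hsq
    exact pos_of_mul_pos_right hsq (thetaSq_pos h0 h1).le

lemma norm_neg_one_pow_mul_pow_oddSq_le {x r : ℝ} (hx : |x| ≤ r) (hr : r ≤ 1) (k n : ℕ) :
    ‖(-1 : ℝ) ^ k * x ^ ((2 * n + 1) ^ 2)‖ ≤ r ^ n := by
  rw [norm_mul, norm_pow, norm_neg, norm_one, one_pow, one_mul, norm_pow, Real.norm_eq_abs]
  exact (pow_le_pow_left₀ (abs_nonneg x) hx _).trans
    (pow_le_pow_of_le_one ((abs_nonneg x).trans hx) hr (by nlinarith))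

lemma continuousOn_thetaOddSqSignedNat {r : ℝ} (hr0 : 0 ≤ r) (hr1 : r < 1) :
    ContinuousOn thetaOddSqSignedNat (Icc (-r) r) :=
  continuousOn_tsum (fun n => by fun_prop) (summable_geometric_of_lt_one hr0 hr1)
    fun n x hx => norm_neg_one_pow_mul_pow_oddSq_le (abs_le.mpr hx) hr1.le _ n

lemma thetaOddSqSignedNat_ne_zero {t : ℝ} (h0 : 0 < t) (h1 : t < 1) :
    thetaOddSqSignedNat t ≠ 0 := by
  have ht : |t| < 1 := by rwa [abs_of_pos h0]
  have hsq : 0 < thetaOddSqSigned t ^ 2 := by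
    rw [thetaOddSqSigned_sq ht]
    have hΦ := thetaSq_neg_pos (by positivity) (pow_lt_one₀ h0.le h1 (n := 8) (by norm_num))
    have hG := thetaOddSq_pos (by positivity) (pow_lt_one₀ h0.le h1 two_ne_zero)
    positivity
  intro h
  rw [thetaOddSqSigned_eq_two_mul ht, h, mul_zero] at hsq
  simp at hsq

lemma thetaOddSqSignedNat_half_pos : 0 < thetaOddSqSignedNat (1 / 2) := by
  have hx : |(1 / 2 : ℝ)| ≤ 1 / 2 := by norm_num
  have hs : Summable fun n : ℕ => (-1 : ℝ) ^ (n * (n + 1) / 2) * (1 / 2) ^ ((2 * n + 1) ^ 2) :=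
    .of_norm_bounded (summable_geometric_of_lt_one (by norm_num) (by norm_num))
      fun n => norm_neg_one_pow_mul_pow_oddSq_le hx (by norm_num) _ n
  have htail : |∑' n : ℕ, (-1 : ℝ) ^ ((n + 1) * (n + 1 + 1) / 2) *
      (1 / 2) ^ ((2 * (n + 1) + 1) ^ 2)| < 1 / 2 := by
    rw [← Real.norm_eq_abs]
    refine (norm_tsum_le_of_norm_le_geometric (r := 1 / 4) (by norm_num) (by norm_num)
      fun n => ?_).trans_lt (by norm_num)
    rw [norm_mul, norm_pow, norm_neg, norm_one, one_pow, one_mul, norm_pow, Real.norm_eq_abs,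
      abs_of_pos (by norm_num), show (1 / 4 : ℝ) = (1 / 2) ^ 2 by norm_num, ← pow_mul]
    exact pow_le_pow_of_le_one (by norm_num) (by norm_num) (by nlinarith)
  rw [thetaOddSqSignedNat, hs.tsum_eq_zero_add,
    show (-1 : ℝ) ^ (0 * (0 + 1) / 2) * (1 / 2 : ℝ) ^ ((2 * 0 + 1) ^ 2) = 1 / 2 by norm_num]
  linarith [(abs_lt.mp htail).1]

lemma IsPreconnected.pos_of_ne_zero {X α : Type*} [TopologicalSpace X] [LinearOrder α]
    [TopologicalSpace α] [OrderClosedTopology α] [Zero α] {s : Set X} (hs : IsPreconnected s)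
    {f : X → α} (hf : ContinuousOn f s) (hne : ∀ x ∈ s, f x ≠ 0) {a b : X} (ha : a ∈ s)
    (hb : b ∈ s) (hfa : 0 < f a) : 0 < f b := by
  by_contra! hfb
  obtain ⟨c, hc, hfc⟩ := hs.intermediate_value hb ha hf ⟨hfb, hfa.le⟩
  exact hne c hc hfc

theorem theta1_value_positive (t : ℝ) (ht : 0 < t) (ht1 : t < 1) :
    0 < ∑' n : ℕ, (-1 : ℝ) ^ (n * (n + 1) / 2) * t ^ ((2 * n + 1) ^ 2) := by
  have hr0 : 0 ≤ max t (1 / 2) := by positivity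
  have hr1 : max t (1 / 2) < 1 := max_lt ht1 (by norm_num)
  have hcont : ContinuousOn thetaOddSqSignedNat (Ioc 0 (max t (1 / 2))) :=
    (continuousOn_thetaOddSqSignedNat hr0 hr1).mono
      (Ioc_subset_Icc_self.trans (Icc_subset_Icc (neg_nonpos.mpr hr0) le_rfl))
  exact isPreconnected_Ioc.pos_of_ne_zero hcont
    (fun x hx => thetaOddSqSignedNat_ne_zero hx.1 (hx.2.trans_lt hr1))
    ⟨one_half_pos, le_max_right _ _⟩ ⟨ht, le_max_left _ _⟩ thetaOddSqSignedNat_half_pos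
end
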